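/- Let W be an N×N real matrix, let ν be a norm on ℝ^N with induced operator norm ν_op, let α > 0 be such that κ := α·ν_op(Wᵀ) < 1, and let γ > 0 be a constant such that the Euclidean norm satisfies ‖v‖ ≤ γ·ν(v) for all v ∈ ℝ^N. Let z ∈ ℝ^N and define c(t+1) = α Wᵀ c(t) + z with arbitrary c(0), and let ρ_α = (I_N − α Wᵀ)⁻¹ z. Then for every t ≥ 0 the Euclidean estimation error satisfies ‖c(t) − ρ_α‖ ≤ γ · ((2 − κ)·κᵗ/(1 − κ)) · max(ν(c(0)), ν(z)). -/

import Mathlib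

/-- The Euclidean norm of a vector in `ℝ^N`. -/
noncomputable def eNorm {N : ℕ} (v : Fin N → ℝ) : ℝ :=
  Real.sqrt (∑ i, v i ^ 2)

/-!
The error `e(t) = c(t) - ρ_α` obeys `e(t+1) = α Wᵀ e(t)`, and `α Wᵀ` contracts `ν` by the
factor `κ`, so `ν(e(t)) ≤ κᵗ ν(e(0))`. The same contraction makes `I - α Wᵀ` injective, hence
invertible, and turns the fixed-point equation `ρ_α = α Wᵀ ρ_α + z` into
`ν(ρ_α) ≤ ν(z) / (1 - κ)`; thus `ν(e(0)) ≤ ν(c(0)) + ν(ρ_α) ≤ (2 - κ)/(1 - κ) · max(ν(c(0)), ν(z))`.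
Finally `‖·‖ ≤ γ ν`.
-/

open Matrix

theorem abs_apply_le_eNorm {N : ℕ} (v : Fin N → ℝ) (i : Fin N) : |v i| ≤ eNorm v := by
  rw [eNorm, ← Real.sqrt_sq_eq_abs]
  exact Real.sqrt_le_sqrt (Finset.single_le_sum (fun j _ => sq_nonneg (v j)) (Finset.mem_univ i))

noncomputable def inducedOpNorm {ι : Type*} [Fintype ι] (p : (ι → ℝ) → ℝ) (A : Matrix ι ι ℝ) :
    ℝ :=
  sSup {r : ℝ | ∃ v : ι → ℝ, p v ≤ 1 ∧ r = p (A *ᵥ v)}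

section InducedOpNorm

variable {ι : Type*} [Fintype ι] (p : Seminorm ℝ (ι → ℝ))

theorem Seminorm.map_mulVec_le (A : Matrix ι ι ℝ) (v : ι → ℝ) :
    p (A *ᵥ v) ≤ ∑ i, |v i| * p (fun j => A j i) := by
  have hsum : A *ᵥ v = ∑ i, v i • (fun j => A j i) := by
    funext j
    simp [mulVec, dotProduct, Finset.sum_apply, mul_comm]
  rw [hsum]
  refine (Finset.le_sum_of_subadditive p (map_zero p).le (map_add_le_add p) _ _).trans_eq ?_
  simp only [map_smul_eq_mul, Real.norm_eq_abs]

variable {p}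

theorem bddAbove_inducedOpNorm_set {C : ℝ} (hC : ∀ v i, |v i| ≤ C * p v) (A : Matrix ι ι ℝ) :
    BddAbove {r : ℝ | ∃ v : ι → ℝ, p v ≤ 1 ∧ r = p (A *ᵥ v)} := by
  refine ⟨∑ i, |C| * p (fun j => A j i), ?_⟩
  rintro r ⟨v, hv, rfl⟩
  refine (p.map_mulVec_le A v).trans (Finset.sum_le_sum fun i _ => ?_)
  have hvi : |v i| ≤ |C| :=
    calc |v i| ≤ C * p v := hC v i
      _ ≤ |C| * p v := mul_le_mul_of_nonneg_right (le_abs_self C) (apply_nonneg p v)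
      _ ≤ |C| := mul_le_of_le_one_right (abs_nonneg C) hv
  exact mul_le_mul_of_nonneg_right hvi (apply_nonneg p _)

theorem inducedOpNorm_nonneg {C : ℝ} (hC : ∀ v i, |v i| ≤ C * p v) (A : Matrix ι ι ℝ) :
    0 ≤ inducedOpNorm p A :=
  le_csSup (bddAbove_inducedOpNorm_set hC A) ⟨0, by simp, by simp⟩

theorem map_mulVec_le_inducedOpNorm_mul (hp : ∀ v, v ≠ 0 → 0 < p v) {C : ℝ}
    (hC : ∀ v i, |v i| ≤ C * p v) (A : Matrix ι ι ℝ) (v : ι → ℝ) :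
    p (A *ᵥ v) ≤ inducedOpNorm p A * p v := by
  rcases eq_or_ne v 0 with rfl | hv
  · simp
  have hpv := hp v hv
  have hunit : p ((p v)⁻¹ • v) ≤ 1 := by
    rw [map_smul_eq_mul, Real.norm_eq_abs, abs_of_pos (inv_pos.mpr hpv), inv_mul_cancel₀ hpv.ne']
  have hle : p (A *ᵥ ((p v)⁻¹ • v)) ≤ inducedOpNorm p A :=
    le_csSup (bddAbove_inducedOpNorm_set hC A) ⟨_, hunit, rfl⟩
  rw [mulVec_smul, map_smul_eq_mul, Real.norm_eq_abs, abs_of_pos (inv_pos.mpr hpv),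
    inv_mul_le_iff₀ hpv, mul_comm] at hle
  exact hle

end InducedOpNorm

section Contraction

variable {E : Type*} [AddCommGroup E] [Module ℝ E] {p : Seminorm ℝ E} {f : E →ₗ[ℝ] E} {κ : ℝ}

theorem Seminorm.one_sub_mul_le_of_eq_add (hf : ∀ v, p (f v) ≤ κ * p v) {ρ z : E}
    (hρ : ρ = f ρ + z) : (1 - κ) * p ρ ≤ p z := by
  have : p ρ ≤ κ * p ρ + p z :=
    calc p ρ = p (f ρ + z) := congrArg p hρ
      _ ≤ p (f ρ) + p z := map_add_le_add p _ _
      _ ≤ κ * p ρ + p z := by gcongr; exact hf ρ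
  linarith

theorem Seminorm.map_sub_fixedPoint_le_pow_mul (hf : ∀ v, p (f v) ≤ κ * p v) (hκ : 0 ≤ κ)
    {ρ z : E} (hρ : ρ = f ρ + z) {c : ℕ → E} (hc : ∀ t, c (t + 1) = f (c t) + z) (t : ℕ) :
    p (c t - ρ) ≤ κ ^ t * p (c 0 - ρ) := by
  induction t with
  | zero => simp
  | succ t ih =>
    have herr : c (t + 1) - ρ = f (c t - ρ) := by
      rw [hc t, map_sub]
      conv_lhs => rw [hρ]
      abel
    calc p (c (t + 1) - ρ) ≤ κ * p (c t - ρ) := herr ▸ hf _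
      _ ≤ κ * (κ ^ t * p (c 0 - ρ)) := mul_le_mul_of_nonneg_left ih hκ
      _ = κ ^ (t + 1) * p (c 0 - ρ) := by ring

theorem Seminorm.map_sub_fixedPoint_le (hf : ∀ v, p (f v) ≤ κ * p v) (hκ₀ : 0 ≤ κ) (hκ₁ : κ < 1)
    {ρ z : E} (hρ : ρ = f ρ + z) {c : ℕ → E} (hc : ∀ t, c (t + 1) = f (c t) + z) (t : ℕ) :
    p (c t - ρ) ≤ (2 - κ) * κ ^ t / (1 - κ) * max (p (c 0)) (p z) := by
  set m := max (p (c 0)) (p z)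
  have hgap : 0 < 1 - κ := by linarith
  have hρm : p ρ ≤ m / (1 - κ) := by
    rw [le_div_iff₀ hgap, mul_comm]
    exact (p.one_sub_mul_le_of_eq_add hf hρ).trans (le_max_right _ _)
  have hinit : p (c 0 - ρ) ≤ (2 - κ) / (1 - κ) * m :=
    calc p (c 0 - ρ) ≤ p (c 0) + p ρ := map_sub_le_add p _ _
      _ ≤ m + m / (1 - κ) := add_le_add (le_max_left _ _) hρm
      _ = (2 - κ) / (1 - κ) * m := by field_simp; ring
  calc p (c t - ρ) ≤ κ ^ t * p (c 0 - ρ) := p.map_sub_fixedPoint_le_pow_mul hf hκ₀ hρ hc t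
    _ ≤ κ ^ t * ((2 - κ) / (1 - κ) * m) := mul_le_mul_of_nonneg_left hinit (pow_nonneg hκ₀ t)
    _ = (2 - κ) * κ ^ t / (1 - κ) * m := by ring

end Contraction

section MatrixContraction

variable {ι : Type*} [Fintype ι] [DecidableEq ι] {p : Seminorm ℝ (ι → ℝ)} {M : Matrix ι ι ℝ}
  {κ : ℝ}

theorem isUnit_det_one_sub_of_contracting (hp : ∀ v, v ≠ 0 → 0 < p v)
    (hM : ∀ v, p (M *ᵥ v) ≤ κ * p v) (hκ : κ < 1) : IsUnit (1 - M).det := by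
  rw [isUnit_iff_ne_zero]
  intro hdet
  obtain ⟨v, hv, hker⟩ := exists_mulVec_eq_zero_iff.mpr hdet
  rw [sub_mulVec, one_mulVec, sub_eq_zero] at hker
  have hle : p v ≤ κ * p v :=
    calc p v = p (M *ᵥ v) := congrArg p hker
      _ ≤ κ * p v := hM v
  nlinarith [hp v hv]

theorem inv_one_sub_mulVec_eq_add (hdet : IsUnit (1 - M).det) (z : ι → ℝ) :
    (1 - M)⁻¹ *ᵥ z = M *ᵥ ((1 - M)⁻¹ *ᵥ z) + z := by
  have h : (1 - M) *ᵥ ((1 - M)⁻¹ *ᵥ z) = z := by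
    rw [mulVec_mulVec, mul_nonsing_inv _ hdet, one_mulVec]
  rw [sub_mulVec, one_mulVec, sub_eq_iff_eq_add] at h
  exact h.trans (add_comm _ _)

end MatrixContraction

theorem alpha_centrality_error_bound_general
    {N : ℕ} (W : Matrix (Fin N) (Fin N) ℝ)
    (ν : (Fin N → ℝ) → ℝ)
    (hν_pos : ∀ v, v ≠ 0 → 0 < ν v)
    (hν_add : ∀ u v, ν (u + v) ≤ ν u + ν v)
    (hν_smul : ∀ (a : ℝ) (v : Fin N → ℝ), ν (a • v) = |a| * ν v)
    (νop : Matrix (Fin N) (Fin N) ℝ → ℝ)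
    (hνop : ∀ A : Matrix (Fin N) (Fin N) ℝ,
      νop A = sSup {r : ℝ | ∃ v : Fin N → ℝ, ν v ≤ 1 ∧ r = ν (A.mulVec v)})
    (α : ℝ) (hα : 0 < α)
    (κ : ℝ) (hκdef : κ = α * νop W.transpose) (hκ : κ < 1)
    (γ : ℝ) (hγ : 0 < γ)
    (hγν : ∀ v : Fin N → ℝ, eNorm v ≤ γ * ν v)
    (z : Fin N → ℝ) (c : ℕ → Fin N → ℝ)
    (hc : ∀ t, c (t + 1) = α • (W.transpose.mulVec (c t)) + z) :
    ∀ t, eNorm (c t - (1 - α • W.transpose)⁻¹.mulVec z)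
      ≤ γ * ((2 - κ) * κ ^ t / (1 - κ)) * max (ν (c 0)) (ν z) := by
  intro t
  let p : Seminorm ℝ (Fin N → ℝ) := Seminorm.of ν hν_add hν_smul
  have hcoord : ∀ v i, |v i| ≤ γ * p v := fun v i => (abs_apply_le_eNorm v i).trans (hγν v)
  have hκ_op : κ = α * inducedOpNorm p Wᵀ := hκdef.trans (congrArg (α * ·) (hνop Wᵀ))
  have hM : ∀ v, p ((α • Wᵀ) *ᵥ v) ≤ κ * p v := by
    intro v
    rw [smul_mulVec, map_smul_eq_mul, Real.norm_eq_abs, abs_of_pos hα, hκ_op, mul_assoc]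
    exact mul_le_mul_of_nonneg_left (map_mulVec_le_inducedOpNorm_mul hν_pos hcoord _ v) hα.le
  have hκ₀ : 0 ≤ κ := hκ_op ▸ mul_nonneg hα.le (inducedOpNorm_nonneg hcoord Wᵀ)
  have hρ := inv_one_sub_mulVec_eq_add (isUnit_det_one_sub_of_contracting hν_pos hM hκ) z
  have hcM : ∀ s, c (s + 1) = (α • Wᵀ).mulVecLin (c s) + z := fun s => by
    rw [hc s, mulVecLin_apply, smul_mulVec]
  calc eNorm (c t - (1 - α • Wᵀ)⁻¹ *ᵥ z) ≤ γ * p (c t - (1 - α • Wᵀ)⁻¹ *ᵥ z) := hγν _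
    _ ≤ γ * ((2 - κ) * κ ^ t / (1 - κ) * max (p (c 0)) (p z)) :=
        mul_le_mul_of_nonneg_left (p.map_sub_fixedPoint_le hM hκ₀ hκ hρ hcM t) hγ.le
    _ = γ * ((2 - κ) * κ ^ t / (1 - κ)) * max (ν (c 0)) (ν z) := (mul_assoc _ _ _).symm

/-- Error bound for the distributed α-centrality estimation: if `ν` is a norm
on `ℝ^N` with induced operator norm `νop`, `κ = α·νop(Wᵀ) < 1`, and `γ > 0` is
such that the Euclidean norm satisfies `‖v‖ ≤ γ·ν(v)` for every `v`, then the
iterates `c(t+1) = α Wᵀ c(t) + z` satisfy, for every `t`,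
`‖c(t) − ρ_α‖ ≤ γ·((2 − κ)·κᵗ/(1 − κ))·max(ν(c 0), ν z)`
where `ρ_α = (I − α Wᵀ)⁻¹ z`. -/
theorem alpha_centrality_error_bound
    {N : ℕ} (W : Matrix (Fin N) (Fin N) ℝ)
    (ν : (Fin N → ℝ) → ℝ)
    (hν_pos : ∀ v, v ≠ 0 → 0 < ν v)
    (hν_zero : ν 0 = 0)
    (hν_add : ∀ u v, ν (u + v) ≤ ν u + ν v)
    (hν_smul : ∀ (a : ℝ) (v : Fin N → ℝ), ν (a • v) = |a| * ν v)
    (νop : Matrix (Fin N) (Fin N) ℝ → ℝ)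
    (hνop : ∀ A : Matrix (Fin N) (Fin N) ℝ,
      νop A = sSup {r : ℝ | ∃ v : Fin N → ℝ, ν v ≤ 1 ∧ r = ν (A.mulVec v)})
    (α : ℝ) (hα : 0 < α)
    (κ : ℝ) (hκdef : κ = α * νop W.transpose) (hκ : κ < 1)
    (γ : ℝ) (hγ : 0 < γ)
    (hγν : ∀ v : Fin N → ℝ, eNorm v ≤ γ * ν v)
    (z : Fin N → ℝ) (c : ℕ → Fin N → ℝ)
    (hc : ∀ t, c (t + 1) = α • (W.transpose.mulVec (c t)) + z) :
    ∀ t, eNorm (c t - (1 - α • W.transpose)⁻¹.mulVec z)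
      ≤ γ * ((2 - κ) * κ ^ t / (1 - κ)) * max (ν (c 0)) (ν z) :=
  alpha_centrality_error_bound_general W ν hν_pos hν_add hν_smul νop hνop α hα κ hκdef hκ γ hγ hγν z
    c hc
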